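/- Let U' = {(z₁, z₂) ∈ ℂ² : z₁ + z̄₁ − 2z₂z̄₂ > 0} and define K : U' → ℝ by K = log(v − 2z₂z̄₂) where v = z₁ + z̄₁. Then K depends on z₁ only through v, and with K_v = ∂K/∂v, K_vv = ∂²K/∂v², K_{v2} = ∂²K/∂v∂z₂, K_{v2̄} = ∂²K/∂v∂z̄₂, K_{22̄} = ∂²K/∂z₂∂z̄₂ (Wirtinger derivatives in z₂), one has: K_v e^{K} = 1, K_v > 0, K_vv < 0 (so εK_vv > 0 with ε = −1), and K satisfies the Przanowski equation K_vv K_{22̄} − K_{v2̄} K_{v2} − 2e^{−K}(K_vv + 2(K_v)²) = 0 everywhere on U'. -/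

import Mathlib

noncomputable section

/-- `w(z₁,z₂) = v − 2z₂z̄₂` where `v = z₁ + z̄₁ = 2 Re z₁`. -/
def wDef (p : ℂ × ℂ) : ℝ := 2 * p.1.re - 2 * Complex.normSq p.2

/-- The region `U' = {(z₁,z₂) ∈ ℂ² : v − 2z₂z̄₂ > 0}`. -/
def Uprime : Set (ℂ × ℂ) := {p | 0 < wDef p}

/-- `K = log(v − 2z₂z̄₂)`. -/
def KDef (p : ℂ × ℂ) : ℝ := Real.log (wDef p)

/-- `K` as a function of `v` at fixed `z₂`. -/
def KofV (z₂ : ℂ) (v : ℝ) : ℝ := Real.log (v - 2 * Complex.normSq z₂)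

/-- `K_v = ∂K/∂v`. -/
def Kv (p : ℂ × ℂ) : ℝ := deriv (KofV p.2) (2 * p.1.re)

/-- `K_vv = ∂²K/∂v²`. -/
def Kvv (p : ℂ × ℂ) : ℝ := deriv (deriv (KofV p.2)) (2 * p.1.re)

/-- The Wirtinger derivative `∂G/∂z = ½(∂_x G − i ∂_y G)` of `G : ℂ → ℂ` at `c`. -/
def wirtD (G : ℂ → ℂ) (c : ℂ) : ℂ :=
  (deriv (fun x : ℝ => G ((x : ℂ) + (c.im : ℂ) * Complex.I)) c.re -
    Complex.I * deriv (fun y : ℝ => G ((c.re : ℂ) + (y : ℂ) * Complex.I)) c.im) / 2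

/-- The Wirtinger derivative `∂G/∂z̄ = ½(∂_x G + i ∂_y G)` of `G : ℂ → ℂ` at `c`. -/
def wirtDbar (G : ℂ → ℂ) (c : ℂ) : ℂ :=
  (deriv (fun x : ℝ => G ((x : ℂ) + (c.im : ℂ) * Complex.I)) c.re +
    Complex.I * deriv (fun y : ℝ => G ((c.re : ℂ) + (y : ℂ) * Complex.I)) c.im) / 2

/-- `K_{v2} = ∂²K/∂v∂z₂` (Wirtinger derivative in `z₂` of `K_v`). -/
def Kv2 (p : ℂ × ℂ) : ℂ :=
  wirtD (fun z₂ => ((deriv (KofV z₂) (2 * p.1.re) : ℝ) : ℂ)) p.2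

/-- `K_{v2̄} = ∂²K/∂v∂z̄₂`. -/
def Kv2bar (p : ℂ × ℂ) : ℂ :=
  wirtDbar (fun z₂ => ((deriv (KofV z₂) (2 * p.1.re) : ℝ) : ℂ)) p.2

/-- `K_{22̄} = ∂²K/∂z₂∂z̄₂` (at fixed `v`). -/
def K22bar (p : ℂ × ℂ) : ℂ :=
  wirtDbar (fun z₂ =>
    wirtD (fun u => ((Real.log (2 * p.1.re - 2 * Complex.normSq u) : ℝ) : ℂ)) z₂) p.2

/-- The 1-form `dz₁ − 2z̄₂dz₂` evaluated on a real tangent vector `X ∈ ℂ² ≅ ℝ⁴`. -/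
def AForm (p : ℂ × ℂ) (X : ℂ × ℂ) : ℂ := X.1 - 2 * starRingEnd ℂ p.2 * X.2

/-- The explicit Ricci-flat metric
`g = (v − 2z₂z̄₂)^{−1/2}(dz₁ − 2z̄₂dz₂)(dz̄₁ − 2z₂dz̄₂) + 4(v − 2z₂z̄₂)^{1/2} dz₂ dz̄₂`
(with `2αβ = α⊗β + β⊗α`) on real tangent vectors. -/
def gExpl (p : ℂ × ℂ) (X Y : ℂ × ℂ) : ℝ :=
  1 / Real.sqrt (wDef p) * (AForm p X * starRingEnd ℂ (AForm p Y)).re +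
    4 * Real.sqrt (wDef p) * (X.2 * starRingEnd ℂ Y.2).re

/-- The almost complex structure
`J⁺_{e^{iφ}} = 2Re{ i e^{iφ} [ (2(v − 2z₂z̄₂)^{1/2})^{−1}(dz₁ − 2z̄₂dz₂) ⊗ (∂_{z̄₂} + 2z₂∂_{z̄₁}) − 2(v − 2z₂z̄₂)^{1/2} dz₂ ⊗ ∂_{z̄₁} ] }`
as a real endomorphism of the tangent space `ℂ² ≅ ℝ⁴`: a real tangent vector `X`
corresponds to `X.1 ∂_{z₁} + conj X.1 ∂_{z̄₁} + X.2 ∂_{z₂} + conj X.2 ∂_{z̄₂}` in the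
complexified tangent space; the components below are the `∂_{z₁}`- and
`∂_{z₂}`-coefficients of `(T + T̄)(X)`. -/
def JExpl (φ : ℝ) (p : ℂ × ℂ) (X : ℂ × ℂ) : ℂ × ℂ :=
  (starRingEnd ℂ (Complex.I * Complex.exp ((φ : ℂ) * Complex.I) *
      (AForm p X / (2 * (Real.sqrt (wDef p) : ℂ)) * (2 * p.2) -
        2 * (Real.sqrt (wDef p) : ℂ) * X.2)),
   starRingEnd ℂ (Complex.I * Complex.exp ((φ : ℂ) * Complex.I) *
      (AForm p X / (2 * (Real.sqrt (wDef p) : ℂ)))))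

/-! With `w = v − 2|z₂|²` one has `K_v = 1/w` and `K_vv = −1/w²`, and `K`, `K_v` depend on `z₂`
only through `|z₂|²`. For such radial functions the Wirtinger derivatives are
`∂_z f(|z|²) = f'(|z|²) z̄` and `∂_z̄ f(|z|²) = f'(|z|²) z` (read off the real Fréchet derivative
`L` as `(L 1 ∓ i L i) / 2`), giving `K_{v2} = 2z̄₂/w²`, `K_{v2̄} = 2z₂/w²` and
`K_{22̄} = −2/w − 4|z₂|²/w²`. Since `e^{−K} = 1/w`, the Przanowski expression is
`2/w³ + 4|z₂|²/w⁴ − 4|z₂|²/w⁴ − 2/w³ = 0`. -/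

open Complex ComplexConjugate Filter Topology

section Wirtinger

variable {G H : ℂ → ℂ} {L : ℂ →L[ℝ] ℂ} {c : ℂ}

theorem HasFDerivAt.hasDerivAt_horizontal (h : HasFDerivAt G L c) :
    HasDerivAt (fun x : ℝ => G (x + c.im * I)) (L 1) c.re := by
  have hc : HasFDerivAt G L ((c.re : ℂ) + c.im * I) := by rwa [re_add_im]
  have hline : HasDerivAt (fun x : ℝ => (x : ℂ) + c.im * I) 1 c.re := by
    simpa using (hasDerivAt_id c.re).ofReal_comp.add_const (c.im * I : ℂ)
  exact hc.comp_hasDerivAt c.re hline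

theorem HasFDerivAt.hasDerivAt_vertical (h : HasFDerivAt G L c) :
    HasDerivAt (fun y : ℝ => G (c.re + y * I)) (L I) c.im := by
  have hc : HasFDerivAt G L ((c.re : ℂ) + c.im * I) := by rwa [re_add_im]
  have hline : HasDerivAt (fun y : ℝ => (c.re : ℂ) + y * I) I c.im := by
    simpa using ((hasDerivAt_id c.im).ofReal_comp.mul_const I).const_add (c.re : ℂ)
  exact hc.comp_hasDerivAt c.im hline

theorem HasFDerivAt.wirtD_eq (h : HasFDerivAt G L c) : wirtD G c = (L 1 - I * L I) / 2 := by
  rw [wirtD, h.hasDerivAt_horizontal.deriv, h.hasDerivAt_vertical.deriv]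

theorem HasFDerivAt.wirtDbar_eq (h : HasFDerivAt G L c) :
    wirtDbar G c = (L 1 + I * L I) / 2 := by
  rw [wirtDbar, h.hasDerivAt_horizontal.deriv, h.hasDerivAt_vertical.deriv]

theorem Filter.EventuallyEq.wirtDbar_eq (h : G =ᶠ[𝓝 c] H) : wirtDbar G c = wirtDbar H c := by
  have hx : Tendsto (fun x : ℝ => (x : ℂ) + c.im * I) (𝓝 c.re) (𝓝 c) :=
    (continuous_ofReal.add continuous_const).tendsto' _ _ (re_add_im c)
  have hy : Tendsto (fun y : ℝ => (c.re : ℂ) + y * I) (𝓝 c.im) (𝓝 c) :=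
    (continuous_const.add (continuous_ofReal.mul continuous_const)).tendsto' _ _ (re_add_im c)
  have hGx : (fun x : ℝ => G (x + c.im * I)) =ᶠ[𝓝 c.re] fun x => H (x + c.im * I) :=
    h.comp_tendsto hx
  have hGy : (fun y : ℝ => G (c.re + y * I)) =ᶠ[𝓝 c.im] fun y => H (c.re + y * I) :=
    h.comp_tendsto hy
  rw [wirtDbar, wirtDbar, hGx.deriv_eq, hGy.deriv_eq]

end Wirtinger

section Radial

variable {f : ℝ → ℝ} {f' : ℝ} {c : ℂ}

theorem HasDerivAt.hasFDerivAt_ofReal_comp_normSq (hf : HasDerivAt f f' (normSq c)) :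
    HasFDerivAt (fun u => (f (normSq u) : ℂ)) (ofRealCLM.comp (f' • 2 • innerSL ℝ c)) c := by
  have hn : HasFDerivAt (fun u : ℂ => ‖u‖ ^ 2) (2 • innerSL ℝ c) c :=
    (hasStrictFDerivAt_norm_sq c).hasFDerivAt
  simp only [normSq_eq_norm_sq] at hf ⊢
  exact ofRealCLM.hasFDerivAt.comp c (hf.comp_hasFDerivAt c hn)

theorem wirtD_ofReal_comp_normSq (hf : HasDerivAt f f' (normSq c)) :
    wirtD (fun u => (f (normSq u) : ℂ)) c = f' * conj c := by
  rw [hf.hasFDerivAt_ofReal_comp_normSq.wirtD_eq]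
  apply Complex.ext <;> simp <;> ring

theorem wirtDbar_ofReal_comp_normSq (hf : HasDerivAt f f' (normSq c)) :
    wirtDbar (fun u => (f (normSq u) : ℂ)) c = f' * c := by
  rw [hf.hasFDerivAt_ofReal_comp_normSq.wirtDbar_eq]
  apply Complex.ext <;> simp <;> ring

theorem wirtDbar_ofReal_comp_normSq_mul_conj (hf : HasDerivAt f f' (normSq c)) :
    wirtDbar (fun u => (f (normSq u) : ℂ) * conj u) c = f' * normSq c + f (normSq c) := by
  have hconj : HasFDerivAt (fun u : ℂ => conj u) (conjCLE : ℂ →L[ℝ] ℂ) c := conjCLE.hasFDerivAt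
  rw [(hf.hasFDerivAt_ofReal_comp_normSq.fun_mul hconj).wirtDbar_eq]
  apply Complex.ext <;> simp [normSq_apply] <;> ring

end Radial

-- `Real.deriv_log` and `deriv_inv` hold at `0` as well (both sides are `0` there), so these
-- formulas need no positivity hypothesis.
theorem deriv_KofV (z₂ : ℂ) : deriv (KofV z₂) = fun v => (v - 2 * normSq z₂)⁻¹ := by
  funext v
  exact (deriv_comp_sub_const (f := Real.log) _ v).trans (Real.deriv_log _)

theorem deriv_deriv_KofV (z₂ : ℂ) :
    deriv (deriv (KofV z₂)) = fun v => -((v - 2 * normSq z₂) ^ 2)⁻¹ := by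
  funext v
  rw [deriv_KofV]
  exact (deriv_comp_sub_const (f := fun x : ℝ => x⁻¹) _ v).trans deriv_inv

theorem Kv_eq (p : ℂ × ℂ) : Kv p = (wDef p)⁻¹ := by
  rw [Kv, deriv_KofV]
  rfl

theorem Kvv_eq (p : ℂ × ℂ) : Kvv p = -(wDef p ^ 2)⁻¹ := by
  rw [Kvv, deriv_deriv_KofV]
  rfl

theorem hasDerivAt_inv_sub_two_mul {a t : ℝ} (h : a - 2 * t ≠ 0) :
    HasDerivAt (fun t => (a - 2 * t)⁻¹) (2 / (a - 2 * t) ^ 2) t := by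
  simpa using (((hasDerivAt_id t).const_mul 2).const_sub a).fun_inv h

theorem hasDerivAt_log_sub_two_mul {a t : ℝ} (h : a - 2 * t ≠ 0) :
    HasDerivAt (fun t => Real.log (a - 2 * t)) (-2 * (a - 2 * t)⁻¹) t := by
  simpa [div_eq_mul_inv] using (((hasDerivAt_id t).const_mul 2).const_sub a).log h

theorem Kv2_eq {p : ℂ × ℂ} (hp : wDef p ≠ 0) : Kv2 p = (2 / wDef p ^ 2 : ℝ) * conj p.2 := by
  simp only [Kv2, deriv_KofV]
  exact wirtD_ofReal_comp_normSq (f := fun t => (2 * p.1.re - 2 * t)⁻¹)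
    (hasDerivAt_inv_sub_two_mul hp)

theorem Kv2bar_eq {p : ℂ × ℂ} (hp : wDef p ≠ 0) : Kv2bar p = (2 / wDef p ^ 2 : ℝ) * p.2 := by
  simp only [Kv2bar, deriv_KofV]
  exact wirtDbar_ofReal_comp_normSq (f := fun t => (2 * p.1.re - 2 * t)⁻¹)
    (hasDerivAt_inv_sub_two_mul hp)

theorem K22bar_eq {p : ℂ × ℂ} (hp : wDef p ≠ 0) :
    K22bar p = (-2 / wDef p - 4 * normSq p.2 / wDef p ^ 2 : ℝ) := by
  have hnear : ∀ᶠ u in 𝓝 p.2, 2 * p.1.re - 2 * normSq u ≠ 0 :=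
    (continuous_const.sub (continuous_const.mul continuous_normSq)).continuousAt.eventually_ne hp
  have hinner : (fun u => wirtD (fun z => (Real.log (2 * p.1.re - 2 * normSq z) : ℂ)) u)
      =ᶠ[𝓝 p.2] fun u => ((-2 * (2 * p.1.re - 2 * normSq u)⁻¹ : ℝ) : ℂ) * conj u := by
    filter_upwards [hnear] with u hu
    exact wirtD_ofReal_comp_normSq (f := fun t => Real.log (2 * p.1.re - 2 * t))
      (hasDerivAt_log_sub_two_mul hu)
  rw [K22bar, hinner.wirtDbar_eq,
    wirtDbar_ofReal_comp_normSq_mul_conj (f := fun t => -2 * (2 * p.1.re - 2 * t)⁻¹)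
      ((hasDerivAt_inv_sub_two_mul hp).const_mul (-2))]
  simp only [wDef]
  push_cast
  ring

theorem exp_neg_KDef {p : ℂ × ℂ} (hp : 0 < wDef p) :
    Complex.exp (-(KDef p : ℂ)) = ((wDef p)⁻¹ : ℝ) := by
  rw [← ofReal_neg, ← ofReal_exp, KDef, Real.exp_neg, Real.exp_log hp]

/-- `K = log(v − 2z₂z̄₂)` depends on `z₁` only through `v`, and on
`U'` it satisfies `K_v e^K = 1`, `K_v > 0`, `K_vv < 0` (so `εK_vv > 0` with `ε = −1`),
and the Przanowski equation
`K_vv K_{22̄} − K_{v2̄} K_{v2} − 2e^{−K}(K_vv + 2(K_v)²) = 0`. -/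
theorem KDef_properties :
    (∀ z₁ z₁' z₂ : ℂ, z₁ + starRingEnd ℂ z₁ = z₁' + starRingEnd ℂ z₁' →
      KDef (z₁, z₂) = KDef (z₁', z₂)) ∧
    (∀ p ∈ Uprime, Kv p * Real.exp (KDef p) = 1) ∧
    (∀ p ∈ Uprime, 0 < Kv p) ∧
    (∀ p ∈ Uprime, Kvv p < 0 ∧ 0 < (-1 : ℝ) * Kvv p) ∧
    (∀ p ∈ Uprime,
      (Kvv p : ℂ) * K22bar p - Kv2bar p * Kv2 p -
        2 * Complex.exp (-(KDef p : ℂ)) * ((Kvv p : ℂ) + 2 * (Kv p : ℂ) ^ 2) = 0) := by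
  refine ⟨fun z₁ z₁' z₂ h => ?_, fun p (hp : 0 < wDef p) => ?_, fun p (hp : 0 < wDef p) => ?_,
    fun p (hp : 0 < wDef p) => ?_, fun p (hp : 0 < wDef p) => ?_⟩
  · rw [add_conj, add_conj, ofReal_inj] at h
    simp only [KDef, wDef, h]
  · rw [Kv_eq, KDef, Real.exp_log hp, inv_mul_cancel₀ (ne_of_gt hp)]
  · rw [Kv_eq]
    exact inv_pos.mpr hp
  · have hKvv : Kvv p < 0 := by
      rw [Kvv_eq]
      exact neg_neg_of_pos (by positivity)
    exact ⟨hKvv, by linarith⟩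
  · have hw : wDef p ≠ 0 := ne_of_gt hp
    rw [Kvv_eq, Kv_eq, K22bar_eq hw, Kv2bar_eq hw, Kv2_eq hw, exp_neg_KDef hp,
      mul_mul_mul_comm, mul_conj]
    push_cast
    field_simp
    ring
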